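/- Let 0 < E ≤ F and for B̂ > 0 set E₁(B̂) = min{ z(2 − z) : z ∈ [E/B̂, F/B̂] } and F₁(B̂) = max{ z(2 − z) : z ∈ [E/B̂, F/B̂] }, assuming F/B̂ < 2. Then the ratio E₁(B̂)/F₁(B̂) is maximized at B̂ = (E + F)/2, and with this choice E₁/F₁ = (1 − ((F−E)/(F+E))²). -/
import Mathlib

/-- Min and max of `z(2−z)` over the scaled interval `[E/B̂, F/B̂]`. -/
noncomputable def E1 (E F Bhat : ℝ) : ℝ :=
  sInf ((fun z : ℝ => z * (2 - z)) '' Set.Icc (E / Bhat) (F / Bhat))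

noncomputable def F1 (E F Bhat : ℝ) : ℝ :=
  sSup ((fun z : ℝ => z * (2 - z)) '' Set.Icc (E / Bhat) (F / Bhat))

lemma f_le_one (z : ℝ) : z * (2 - z) ≤ 1 := by nlinarith [sq_nonneg (1 - z)]

lemma sInf_image_eq (a b : ℝ) (h : a ≤ b) :
    sInf ((fun z : ℝ => z * (2 - z)) '' Set.Icc a b)
      = min (a * (2 - a)) (b * (2 - b)) := by
  have key : ∀ z ∈ Set.Icc a b, min (a * (2 - a)) (b * (2 - b)) ≤ z * (2 - z) := by
    rintro z ⟨hz1, hz2⟩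
    rcases le_or_gt (z + a) 2 with hc | hc
    · exact le_trans (min_le_left _ _) (by nlinarith)
    · exact le_trans (min_le_right _ _) (by nlinarith)
  have hbdd : BddBelow ((fun z : ℝ => z * (2 - z)) '' Set.Icc a b) := by
    refine ⟨min (a * (2 - a)) (b * (2 - b)), ?_⟩
    rintro y ⟨z, hz, rfl⟩
    exact key z hz
  refine le_antisymm (le_min ?_ ?_) ?_
  · exact csInf_le hbdd ⟨a, Set.left_mem_Icc.2 h, rfl⟩
  · exact csInf_le hbdd ⟨b, Set.right_mem_Icc.2 h, rfl⟩
  · refine le_csInf ((Set.nonempty_Icc.2 h).image _) ?_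
    rintro y ⟨z, hz, rfl⟩
    exact key z hz

lemma bddAbove_image (a b : ℝ) :
    BddAbove ((fun z : ℝ => z * (2 - z)) '' Set.Icc a b) := by
  refine ⟨1, ?_⟩
  rintro y ⟨z, _, rfl⟩
  exact f_le_one z

lemma le_sSup_image (a b z : ℝ) (hz : z ∈ Set.Icc a b) :
    z * (2 - z) ≤ sSup ((fun z : ℝ => z * (2 - z)) '' Set.Icc a b) :=
  le_csSup (bddAbove_image a b) ⟨z, hz, rfl⟩

lemma sSup_image_eq (a b : ℝ) (ha : a ≤ 1) (hb : 1 ≤ b) :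
    sSup ((fun z : ℝ => z * (2 - z)) '' Set.Icc a b) = 1 := by
  refine le_antisymm ?_ ?_
  · refine csSup_le ((Set.nonempty_Icc.2 (ha.trans hb)).image _) ?_
    rintro y ⟨z, _, rfl⟩
    exact f_le_one z
  · have := le_sSup_image a b 1 ⟨ha, hb⟩
    linarith

lemma final_eq (E F : ℝ) (hE : 0 < E) (hF : 0 < F) :
    4 * E * F / (E + F) ^ 2 = 1 - ((F - E) / (F + E)) ^ 2 := by
  have h : F + E ≠ 0 := by positivity
  have h2 : E + F ≠ 0 := by positivity
  field_simp
  ring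

/-- The optimal initial scaling constant for dual iteration IV is `B̂ = (E+F)/2`,
and the resulting ratio is `1 − ((F−E)/(F+E))²`. -/
theorem stmt9 (E F : ℝ) (hE : 0 < E) (hEF : E ≤ F) :
    (∀ Bhat : ℝ, 0 < Bhat → F / Bhat < 2 →
      E1 E F Bhat / F1 E F Bhat ≤ E1 E F ((E + F) / 2) / F1 E F ((E + F) / 2)) ∧
    E1 E F ((E + F) / 2) / F1 E F ((E + F) / 2) = 1 - ((F - E) / (F + E)) ^ 2 := by
  have hF : 0 < F := lt_of_lt_of_le hE hEF
  have hS : 0 < E + F := by linarith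
  have hS' : (E + F) ≠ 0 := ne_of_gt hS
  -- optimal point computations
  have ha1 : E / ((E + F) / 2) ≤ 1 := by
    rw [div_le_one (by positivity)]; linarith
  have hb1 : (1 : ℝ) ≤ F / ((E + F) / 2) := by
    rw [le_div_iff₀ (by positivity)]; linarith
  have habopt : E / ((E + F) / 2) ≤ F / ((E + F) / 2) := le_trans ha1 hb1
  have hF1opt : F1 E F ((E + F) / 2) = 1 := sSup_image_eq _ _ ha1 hb1
  have hE1opt : E1 E F ((E + F) / 2) = 4 * E * F / (E + F) ^ 2 := by
    rw [E1, sInf_image_eq _ _ habopt]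
    have h1 : E / ((E + F) / 2) * (2 - E / ((E + F) / 2)) = 4 * E * F / (E + F) ^ 2 := by
      field_simp; ring
    have h2 : F / ((E + F) / 2) * (2 - F / ((E + F) / 2)) = 4 * E * F / (E + F) ^ 2 := by
      field_simp; ring
    rw [h1, h2, min_self]
  have hratio : E1 E F ((E + F) / 2) / F1 E F ((E + F) / 2) = 4 * E * F / (E + F) ^ 2 := by
    rw [hE1opt, hF1opt, div_one]
  constructor
  · intro B hB hFB
    set a := E / B with hadef
    set b := F / B with hbdef
    have ha : 0 < a := div_pos hE hB
    have hab : a ≤ b := by rw [hadef, hbdef]; gcongr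
    have hb2 : b < 2 := hFB
    have ha2 : a < 2 := lt_of_le_of_lt hab hb2
    have hfa : 0 < a * (2 - a) := by nlinarith
    have hfb : 0 < b * (2 - b) := by nlinarith
    have hE1 : E1 E F B = min (a * (2 - a)) (b * (2 - b)) := sInf_image_eq a b hab
    have hmid : (a + b) / 2 ∈ Set.Icc a b := ⟨by linarith, by linarith⟩
    have hSle : ((a + b) / 2) * (2 - (a + b) / 2) ≤ F1 E F B := le_sSup_image a b _ hmid
    have hSpos : 0 < F1 E F B := lt_of_lt_of_le hfa (le_sSup_image a b a ⟨le_refl a, hab⟩)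
    have hRpos : 0 < 4 * E * F / (E + F) ^ 2 := by positivity
    have hRab : 4 * E * F / (E + F) ^ 2 = 4 * a * b / (a + b) ^ 2 := by
      rw [hadef, hbdef]
      field_simp
    -- key inequality
    have hkey : min (a * (2 - a)) (b * (2 - b)) ≤
        (4 * a * b / (a + b) ^ 2) * (((a + b) / 2) * (2 - (a + b) / 2)) := by
      rw [show (4 * a * b / (a + b) ^ 2) * (((a + b) / 2) * (2 - (a + b) / 2))
            = (4 * a * b * (((a + b) / 2) * (2 - (a + b) / 2))) / (a + b) ^ 2 from by ring,
          le_div_iff₀ (by positivity : (0:ℝ) < (a + b) ^ 2)]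
      rcases min_cases (a * (2 - a)) (b * (2 - b)) with ⟨h1, h2⟩ | ⟨h1, h2⟩ <;> rw [h1]
      · nlinarith [mul_nonneg ha.le (sub_nonneg.2 h2), sq_nonneg (a + b)]
      · nlinarith [mul_nonneg (lt_of_lt_of_le ha hab).le (sub_nonneg.2 h2.le), sq_nonneg (a + b)]
    rw [hratio, div_le_iff₀ hSpos, hE1]
    calc min (a * (2 - a)) (b * (2 - b))
        ≤ (4 * E * F / (E + F) ^ 2) * (((a + b) / 2) * (2 - (a + b) / 2)) := by
          rw [hRab]; exact hkey
      _ ≤ (4 * E * F / (E + F) ^ 2) * F1 E F B :=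
          mul_le_mul_of_nonneg_left hSle hRpos.le
  · rw [hratio, final_eq E F hE hF]
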